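/- arXiv:math/0507532 — 4 statements merged into one kernel-verified Lean document; each statement's English description precedes it below -/
import Mathlib

section
/- Let P and Q be orthogonal projections on a Hilbert space with ‖P(I − Q)‖ < 1 and ‖Q(I − P)‖ < 1. Then ‖P(I−Q)‖ = ‖Q(I−P)‖ = ‖P − Q‖. -/
/-!
Always `‖P(I - Q)‖ ≤ ‖P - Q‖`, since `P(I - Q) = P(P - Q)` and `‖P‖ ≤ 1`; and
`‖P - Q‖ ≤ max ‖P(I - Q)‖ ‖Q(I - P)‖` by Pythagoras, as `(P - Q)x = (I - Q)Px - Q(I - P)x` is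
an orthogonal decomposition. So the hypotheses give `‖P - Q‖ < 1`.

Then `F = I - P - Q` is invertible, because `F² = I - (P - Q)²`. It intertwines the two
projections, `FP = QF` and `F(I - Q) = (I - P)F`, hence conjugates `P(I - Q)P` to `Q(I - P)Q`.
These are self-adjoint with norms `‖P(I - Q)‖²` and `‖Q(I - P)‖²`, and similar self-adjoint
elements of a C⋆-algebra have the same spectral radius, i.e. the same norm.
-/

open scoped InnerProductSpace

section Ring

variable {R : Type*} [Ring R] {p q : R}

theorem IsIdempotentElem.one_sub_sub_mul_eq_mul_one_sub_sub (hp : IsIdempotentElem p)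
    (hq : IsIdempotentElem q) : (1 - p - q) * p = q * (1 - p - q) := by
  simp only [sub_mul, mul_sub, one_mul, mul_one, hp.eq, hq.eq]
  abel

theorem IsIdempotentElem.one_sub_sub_mul_self (hp : IsIdempotentElem p)
    (hq : IsIdempotentElem q) : (1 - p - q) * (1 - p - q) = 1 - (p - q) * (p - q) := by
  simp only [sub_mul, mul_sub, one_mul, mul_one, hp.eq, hq.eq]
  abel

theorem IsIdempotentElem.one_sub_sub_mul_mul_one_sub_mul (hp : IsIdempotentElem p)
    (hq : IsIdempotentElem q) :
    (1 - p - q) * (p * (1 - q) * p) = q * (1 - p) * q * (1 - p - q) := by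
  have hpq := hp.one_sub_sub_mul_eq_mul_one_sub_sub hq
  have hpq' : (1 - p - q) * (1 - q) = (1 - p) * (1 - p - q) := by
    have h := hq.one_sub.one_sub_sub_mul_eq_mul_one_sub_sub hp.one_sub
    rwa [show 1 - (1 - q) - (1 - p) = -(1 - p - q) by abel, neg_mul, mul_neg, neg_inj] at h
  calc (1 - p - q) * (p * (1 - q) * p) = q * ((1 - p - q) * (1 - q)) * p := by
        simp only [← mul_assoc, hpq]
    _ = q * (1 - p) * ((1 - p - q) * p) := by rw [hpq']; simp only [mul_assoc]
    _ = q * (1 - p) * q * (1 - p - q) := by rw [hpq, mul_assoc (q * (1 - p))]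

end Ring

theorem IsIdempotentElem.isUnit_one_sub_sub {R : Type*} [NormedRing R] [HasSummableGeomSeries R]
    {p q : R} (hp : IsIdempotentElem p) (hq : IsIdempotentElem q) (h : ‖p - q‖ < 1) :
    IsUnit (1 - p - q) := by
  have hsq : ‖(p - q) * (p - q)‖ < 1 :=
    (norm_mul_le _ _).trans_lt (mul_lt_one_of_nonneg_of_lt_one_left (norm_nonneg _) h h.le)
  have h := isUnit_one_sub_of_norm_lt_one hsq
  rw [← hp.one_sub_sub_mul_self hq] at h
  exact ((Commute.refl _).isUnit_mul_iff.mp h).1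

theorem IsStarProjection.mul_one_sub_mul_eq_mul_star {R : Type*} [Ring R] [StarRing R]
    {p q : R} (hq : IsStarProjection q) (hp : IsSelfAdjoint p) :
    p * (1 - q) * p = p * (1 - q) * star (p * (1 - q)) := by
  rw [star_mul, hq.one_sub.isSelfAdjoint.star_eq, hp.star_eq, ← mul_assoc,
    mul_assoc p (1 - q) (1 - q), hq.one_sub.isIdempotentElem.eq]

section CStarAlgebra

variable {A : Type*} [CStarAlgebra A]

theorem IsSelfAdjoint.norm_units_conjugate {a : A} (u : Aˣ) (ha : IsSelfAdjoint a)
    (hua : IsSelfAdjoint (u * a * u⁻¹ : A)) : ‖(u * a * u⁻¹ : A)‖ = ‖a‖ := by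
  have h : spectralRadius ℂ (u * a * u⁻¹ : A) = spectralRadius ℂ a := by
    simp only [spectralRadius, spectrum.units_conjugate]
  rw [hua.spectralRadius_eq_nnnorm, ha.spectralRadius_eq_nnnorm] at h
  exact congrArg NNReal.toReal (ENNReal.coe_injective h)

theorem IsStarProjection.norm_mul_one_sub_eq_of_norm_sub_lt_one {p q : A}
    (hp : IsStarProjection p) (hq : IsStarProjection q) (h : ‖p - q‖ < 1) :
    ‖p * (1 - q)‖ = ‖q * (1 - p)‖ := by
  obtain ⟨u, hu⟩ := hp.isIdempotentElem.isUnit_one_sub_sub hq.isIdempotentElem h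
  have hconj : (u : A) * (p * (1 - q) * p) * ↑u⁻¹ = q * (1 - p) * q := by
    rw [hu, hp.isIdempotentElem.one_sub_sub_mul_mul_one_sub_mul hq.isIdempotentElem, ← hu,
      mul_assoc, Units.mul_inv, mul_one]
  have hpq := hq.mul_one_sub_mul_eq_mul_star hp.isSelfAdjoint
  have hqp := hp.mul_one_sub_mul_eq_mul_star hq.isSelfAdjoint
  have hnorm := IsSelfAdjoint.norm_units_conjugate u
    (hpq ▸ IsSelfAdjoint.mul_star_self _) (hconj ▸ hqp ▸ IsSelfAdjoint.mul_star_self _)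
  rw [hconj, hpq, hqp, CStarRing.norm_self_mul_star, CStarRing.norm_self_mul_star] at hnorm
  exact (mul_self_inj (norm_nonneg _) (norm_nonneg _)).mp hnorm.symm

theorem IsStarProjection.norm_mul_one_sub_le_norm_sub {p q : A} (hp : IsStarProjection p) :
    ‖p * (1 - q)‖ ≤ ‖p - q‖ :=
  calc ‖p * (1 - q)‖ = ‖p * (p - q)‖ := by
        rw [mul_sub, mul_sub, mul_one, hp.isIdempotentElem.eq]
    _ ≤ ‖p‖ * ‖p - q‖ := norm_mul_le _ _
    _ ≤ ‖p - q‖ := mul_le_of_le_one_left (norm_nonneg _) hp.norm_le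

end CStarAlgebra

section Hilbert

variable {𝕜 E : Type*} [RCLike 𝕜] [NormedAddCommGroup E] [InnerProductSpace 𝕜 E]
  [CompleteSpace E]

open ContinuousLinearMap

theorem IsStarProjection.inner_apply_one_sub_apply {T : E →L[𝕜] E} (hT : IsStarProjection T)
    (x y : E) : ⟪T x, (1 - T) y⟫_𝕜 = 0 := by
  rw [← adjoint_inner_right, hT.isSelfAdjoint.adjoint_eq, ← mul_apply_eq_comp,
    hT.mul_one_sub_self, zero_apply, inner_zero_right]

theorem IsStarProjection.norm_apply_sq_add_norm_one_sub_apply_sq {T : E →L[𝕜] E}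
    (hT : IsStarProjection T) (x : E) : ‖T x‖ ^ 2 + ‖(1 - T) x‖ ^ 2 = ‖x‖ ^ 2 := by
  have h := norm_add_sq_eq_norm_sq_add_norm_sq_of_inner_eq_zero _ _
    (hT.inner_apply_one_sub_apply x x)
  rw [← add_apply, add_sub_cancel, one_apply_eq_self] at h
  rw [sq, sq, sq, h]

theorem IsStarProjection.norm_sub_le_max {P Q : E →L[𝕜] E} (hP : IsStarProjection P)
    (hQ : IsStarProjection Q) : ‖P - Q‖ ≤ max ‖P * (1 - Q)‖ ‖Q * (1 - P)‖ := by
  set a := ‖P * (1 - Q)‖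
  set b := ‖Q * (1 - P)‖
  refine opNorm_le_bound _ (le_max_of_le_left (norm_nonneg _)) fun x => ?_
  have hsplit : (P - Q) x = (1 - Q) (P x) + -Q ((1 - P) x) := by
    simp only [sub_apply, map_sub]
    abel
  have horth : ⟪(1 - Q) (P x), -Q ((1 - P) x)⟫_𝕜 = 0 := by
    rw [inner_neg_right, ← inner_conj_symm, hQ.inner_apply_one_sub_apply, map_zero, neg_zero]
  have ha : ‖(1 - Q) (P x)‖ ≤ a * ‖P x‖ := by
    have h : (1 - Q) (P x) = ((1 - Q) * P) (P x) := by
      rw [mul_apply_eq_comp, ← mul_apply_eq_comp P P, hP.isIdempotentElem.eq]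
    rw [h, show a = ‖(1 - Q) * P‖ by
      rw [← norm_star, star_mul, hP.isSelfAdjoint.star_eq, hQ.one_sub.isSelfAdjoint.star_eq]]
    exact le_opNorm _ _
  have hb : ‖Q ((1 - P) x)‖ ≤ b * ‖(1 - P) x‖ := by
    have h : Q ((1 - P) x) = (Q * (1 - P)) ((1 - P) x) := by
      rw [mul_apply_eq_comp, ← mul_apply_eq_comp (1 - P) (1 - P), hP.one_sub.isIdempotentElem.eq]
    rw [h]
    exact le_opNorm _ _
  have hPx := hP.norm_apply_sq_add_norm_one_sub_apply_sq x
  have hsq : ‖(P - Q) x‖ ^ 2 ≤ (max a b * ‖x‖) ^ 2 :=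
    calc ‖(P - Q) x‖ ^ 2 = ‖(1 - Q) (P x)‖ ^ 2 + ‖Q ((1 - P) x)‖ ^ 2 := by
          rw [hsplit, sq, norm_add_sq_eq_norm_sq_add_norm_sq_of_inner_eq_zero _ _ horth, norm_neg,
            sq, sq]
      _ ≤ (max a b * ‖P x‖) ^ 2 + (max a b * ‖(1 - P) x‖) ^ 2 := by
          gcongr
          · exact ha.trans (by gcongr; exact le_max_left _ _)
          · exact hb.trans (by gcongr; exact le_max_right _ _)
      _ = (max a b * ‖x‖) ^ 2 := by rw [mul_pow, mul_pow, mul_pow, ← mul_add, hPx]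
  exact (pow_le_pow_iff_left₀ (norm_nonneg _) (by positivity) two_ne_zero).mp hsq

end Hilbert

theorem kato_projection_alternative
    {E : Type*} [NormedAddCommGroup E] [InnerProductSpace ℂ E] [CompleteSpace E]
    (P Q : E →L[ℂ] E)
    (hP : IsIdempotentElem P) (hQ : IsIdempotentElem Q)
    (hPsa : IsSelfAdjoint P) (hQsa : IsSelfAdjoint Q)
    (h1 : ‖P * (1 - Q)‖ < 1) (h2 : ‖Q * (1 - P)‖ < 1) :
    ‖P * (1 - Q)‖ = ‖Q * (1 - P)‖ ∧ ‖P * (1 - Q)‖ = ‖P - Q‖ := by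
  have hPproj : IsStarProjection P := ⟨hP, hPsa⟩
  have hQproj : IsStarProjection Q := ⟨hQ, hQsa⟩
  have hmax := hPproj.norm_sub_le_max hQproj
  have heq := hPproj.norm_mul_one_sub_eq_of_norm_sub_lt_one hQproj (hmax.trans_lt (max_lt h1 h2))
  refine ⟨heq, le_antisymm hPproj.norm_mul_one_sub_le_norm_sub ?_⟩
  exact hmax.trans_eq (max_eq_left heq.ge)
end

section
/- For orthogonal projections P and Q on a Hilbert space, if (I−Q)P and (I−P)Q are Hilbert–Schmidt, then P − Q is Hilbert–Schmidt and ‖P−Q‖²_{HS} = ‖(I−Q)P‖²_{HS} + ‖(I−P)Q‖²_{HS}. -/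
open scoped InnerProductSpace ENNReal NNReal
open ContinuousLinearMap

/-- An operator is Hilbert–Schmidt (w.r.t. the Hilbert basis `b`) if the squared norms of
the images of the basis vectors are summable. -/
def IsHilbertSchmidt {E ι : Type*} [NormedAddCommGroup E] [InnerProductSpace ℂ E]
    [CompleteSpace E] (b : HilbertBasis ι ℂ E) (T : E →L[ℂ] E) : Prop :=
  Summable fun i => ‖T (b i)‖ ^ 2

/-- The squared Hilbert–Schmidt norm with respect to the Hilbert basis `b`. -/
noncomputable def hsNormSq {E ι : Type*} [NormedAddCommGroup E] [InnerProductSpace ℂ E]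
    [CompleteSpace E] (b : HilbertBasis ι ℂ E) (T : E →L[ℂ] E) : ℝ :=
  ∑' i, ‖T (b i)‖ ^ 2

section Aux

variable {E ι : Type*} [NormedAddCommGroup E] [InnerProductSpace ℂ E] [CompleteSpace E]

lemma parseval_sq (b : HilbertBasis ι ℂ E) (v : E) :
    HasSum (fun j => ‖(⟪b j, v⟫_ℂ)‖ ^ 2) (‖v‖ ^ 2) := by
  have h := lp.hasSum_norm (p := 2) (by norm_num) (b.repr v)
  simp only [ENNReal.toReal_ofNat] at h
  have hn : ‖b.repr v‖ = ‖v‖ := b.repr.norm_map v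
  rw [hn] at h
  convert h using 2 with j
  · rw [b.repr_apply_apply]; norm_num [Real.rpow_natCast]
  · norm_num [Real.rpow_natCast]

lemma parseval_ennreal (b : HilbertBasis ι ℂ E) (v : E) :
    ∑' j, (‖(⟪b j, v⟫_ℂ)‖₊ ^ 2 : ℝ≥0∞) = (‖v‖₊ ^ 2 : ℝ≥0∞) := by
  have h := parseval_sq b v
  have h' : HasSum (fun j => (‖(⟪b j, v⟫_ℂ)‖₊ ^ 2 : ℝ≥0)) (‖v‖₊ ^ 2) := by
    rw [← NNReal.hasSum_coe]
    push_cast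
    exact h
  rw [show ((‖v‖₊ : ℝ≥0∞) ^ 2) = ((‖v‖₊ ^ 2 : ℝ≥0) : ℝ≥0∞) by push_cast; rfl,
    ← h'.tsum_eq, ENNReal.coe_tsum h'.summable]
  push_cast
  rfl

/-- ennreal form of the HS norm. -/
noncomputable def hsE (b : HilbertBasis ι ℂ E) (T : E →L[ℂ] E) : ℝ≥0∞ :=
  ∑' i, (‖T (b i)‖₊ ^ 2 : ℝ≥0∞)

lemma hsE_eq_double (b : HilbertBasis ι ℂ E) (T : E →L[ℂ] E) :
    hsE b T = ∑' i, ∑' j, (‖(⟪b j, T (b i)⟫_ℂ)‖₊ ^ 2 : ℝ≥0∞) := by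
  unfold hsE
  exact tsum_congr fun i => (parseval_ennreal b (T (b i))).symm

lemma hsE_adjoint (b : HilbertBasis ι ℂ E) (T : E →L[ℂ] E) :
    hsE b (adjoint T) = hsE b T := by
  rw [hsE_eq_double b T, hsE_eq_double b (adjoint T), ENNReal.tsum_comm]
  refine tsum_congr fun i => tsum_congr fun j => ?_
  have : ⟪b i, (adjoint T) (b j)⟫_ℂ = starRingEnd ℂ ⟪b j, T (b i)⟫_ℂ := by
    rw [adjoint_inner_right, ← inner_conj_symm]
  rw [this, RCLike.nnnorm_conj]

lemma isHS_iff_hsE (b : HilbertBasis ι ℂ E) (T : E →L[ℂ] E) :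
    IsHilbertSchmidt b T ↔ hsE b T ≠ ⊤ := by
  unfold IsHilbertSchmidt hsE
  have h1 : (fun i => ((‖T (b i)‖₊ : ℝ≥0∞)) ^ 2) =
      fun i => ((‖T (b i)‖₊ ^ 2 : ℝ≥0) : ℝ≥0∞) := by
    funext i; push_cast; rfl
  rw [h1, ENNReal.tsum_coe_ne_top_iff_summable_coe]
  have h2 : (fun i => ((‖T (b i)‖₊ ^ 2 : ℝ≥0) : ℝ)) = fun i => ‖T (b i)‖ ^ 2 := by
    funext i; push_cast; rfl
  rw [h2]

lemma hsNormSq_eq_toReal (b : HilbertBasis ι ℂ E) (T : E →L[ℂ] E) :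
    hsNormSq b T = (hsE b T).toReal := by
  unfold hsNormSq hsE
  rw [ENNReal.tsum_toReal_eq (fun i => by simp [ENNReal.pow_ne_top])]
  refine tsum_congr fun i => ?_
  simp

end Aux

theorem hs_norm_projection_difference
    {E ι : Type*} [NormedAddCommGroup E] [InnerProductSpace ℂ E] [CompleteSpace E]
    (b : HilbertBasis ι ℂ E) (P Q : E →L[ℂ] E)
    (hP : IsIdempotentElem P) (hQ : IsIdempotentElem Q)
    (hPsa : IsSelfAdjoint P) (hQsa : IsSelfAdjoint Q)
    (h1 : IsHilbertSchmidt b ((1 - Q) * P)) (h2 : IsHilbertSchmidt b ((1 - P) * Q)) :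
    IsHilbertSchmidt b (P - Q) ∧
      hsNormSq b (P - Q) = hsNormSq b ((1 - Q) * P) + hsNormSq b ((1 - P) * Q) := by
  set A : E →L[ℂ] E := (1 - Q) * P with hA
  set C : E →L[ℂ] E := (1 - P) * Q with hC
  set B : E →L[ℂ] E := Q * (1 - P) with hB
  -- B is the adjoint of C
  have hBC : adjoint C = B := by
    rw [hC, hB, ← ContinuousLinearMap.star_eq_adjoint]
    rw [star_mul]
    rw [star_sub, star_one, hQsa.star_eq, hPsa.star_eq]
  -- pointwise Pythagoras
  have key : ∀ x : E, ‖(P - Q) x‖ ^ 2 = ‖A x‖ ^ 2 + ‖B x‖ ^ 2 := by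
    intro x
    have hd : (P - Q) x = A x - B x := by
      have : P - Q = A - B := by rw [hA, hB]; noncomm_ring
      rw [this]; simp
    have horth : ⟪A x, B x⟫_ℂ = 0 := by
      have : ⟪A x, B x⟫_ℂ = ⟪(Q * (1 - Q)) (P x), (1 - P) x⟫_ℂ := by
        rw [hA, hB]
        simp only [ContinuousLinearMap.mul_apply]
        rw [← adjoint_inner_right Q, ← ContinuousLinearMap.star_eq_adjoint, hQsa.star_eq]
      have hzero : Q * (1 - Q) = 0 := by
        rw [mul_sub, mul_one, hQ.eq, sub_self]
      rw [this, hzero]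
      simp
    rw [hd, norm_sub_sq (𝕜 := ℂ), horth]
    simp
  -- ennreal identity
  have keyE : hsE b (P - Q) = hsE b A + hsE b B := by
    unfold hsE
    rw [← ENNReal.tsum_add]
    refine tsum_congr fun i => ?_
    have h := key (b i)
    have : (‖(P - Q) (b i)‖₊ ^ 2 : ℝ≥0) = ‖A (b i)‖₊ ^ 2 + ‖B (b i)‖₊ ^ 2 := by
      ext
      push_cast
      exact h
    rw [show ((‖(P - Q) (b i)‖₊ : ℝ≥0∞)) ^ 2 = ((‖(P - Q) (b i)‖₊ ^ 2 : ℝ≥0) : ℝ≥0∞) by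
      push_cast; rfl, this]
    push_cast
    rfl
  have hBE : hsE b B = hsE b C := by rw [← hBC, hsE_adjoint]
  have hAfin : hsE b A ≠ ⊤ := (isHS_iff_hsE b A).1 h1
  have hCfin : hsE b C ≠ ⊤ := (isHS_iff_hsE b C).1 h2
  have hfin : hsE b (P - Q) ≠ ⊤ := by
    rw [keyE, hBE]
    exact ENNReal.add_ne_top.2 ⟨hAfin, hCfin⟩
  refine ⟨(isHS_iff_hsE b _).2 hfin, ?_⟩
  rw [hsNormSq_eq_toReal, hsNormSq_eq_toReal, hsNormSq_eq_toReal, keyE, hBE,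
    ENNReal.toReal_add hAfin hCfin]
end

section
/- Let h and m be positive definite Hermitian matrices (viewed via their quadratic forms) such that |⟨u, Mu'⟩ − ⟨u, Hu'⟩| ≤ ε·√(⟨u,Hu⟩·⟨u',Mu'⟩) for all u, u'. Then |⟨u, M^{1/2}u'⟩ − ⟨u, H^{1/2}u'⟩| ≤ (ε/2)·√(⟨u,H^{1/2}u⟩·⟨u',M^{1/2}u'⟩) for all u, u'. -/
/-!
Put `D = sM - sH`. Since `M - H = sH D + D sM`, in eigenbases `sH eᵢ = aᵢ eᵢ`, `sM fⱼ = bⱼ fⱼ`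
the matrix of `D` is that of `M - H` divided entrywise by `aᵢ + bⱼ`. The Cauchy matrix
`(cₖ + cₗ)⁻¹` (cₖ > 0) is positive semidefinite, being the Gram matrix of `t ↦ exp (-cₖ t)` in
`L²(0, ∞)`; factoring it over the eigenvalues of both operators gives
`(aᵢ + bⱼ)⁻¹ = ∑ᵣ gᵢᵣ hⱼᵣ` with `∑ᵣ gᵢᵣ² = (2aᵢ)⁻¹`, `∑ᵣ hⱼᵣ² = (2bⱼ)⁻¹`. Hence
`⟪u, D u'⟫ = ∑ᵣ ⟪vᵣ, (M - H) wᵣ⟫`, where `vᵣ`, `wᵣ` rescale the coordinates of `u`, `u'` by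
`gᵢᵣ`, `hⱼᵣ`. Bounding each term by the hypothesis and applying Cauchy–Schwarz over `r` leaves
`∑ᵣ ⟪vᵣ, H vᵣ⟫ = ⟪u, sH u⟫ / 2` and `∑ᵣ ⟪wᵣ, M wᵣ⟫ = ⟪u', sM u'⟫ / 2`.
-/

open scoped InnerProductSpace ComplexConjugate

section CauchyMatrix

open MeasureTheory Set Real Matrix

lemma integral_exp_neg_mul_mul_exp_neg_mul {a b : ℝ} (hab : 0 < a + b) :
    ∫ t in Ioi (0 : ℝ), exp (-a * t) * exp (-b * t) = (a + b)⁻¹ := by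
  simp_rw [← Real.exp_add, ← add_mul]
  rw [integral_exp_mul_Ioi (by linarith), mul_zero, exp_zero, ← neg_add, neg_div_neg_eq, one_div]

lemma Matrix.posSemidef_inv_add {ι : Type*} [Fintype ι] {c : ι → ℝ} (hc : ∀ k, 0 < c k) :
    (Matrix.of fun k l => (c k + c l)⁻¹).PosSemidef := by
  refine .of_dotProduct_mulVec_nonneg ?_ fun x => ?_
  · ext k l
    simp [add_comm]
  have hint : ∀ k l, Integrable (fun t => x k * exp (-c k * t) * (x l * exp (-c l * t)))
      (volume.restrict (Ioi 0)) := by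
    intro k l
    simp_rw [mul_mul_mul_comm, ← Real.exp_add, ← add_mul, ← neg_add]
    exact (exp_neg_integrableOn_Ioi 0 (add_pos (hc k) (hc l))).const_mul _
  have hquad : star x ⬝ᵥ ((Matrix.of fun k l => (c k + c l)⁻¹) *ᵥ x)
      = ∫ t in Ioi (0 : ℝ), (∑ k, x k * exp (-c k * t)) ^ 2 := by
    simp_rw [sq, Finset.sum_mul_sum]
    rw [integral_finsetSum _ fun k _ => integrable_finsetSum _ fun l _ => hint k l]
    simp_rw [integral_finsetSum _ fun l _ => hint _ l, mul_mul_mul_comm, integral_const_mul,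
      integral_exp_neg_mul_mul_exp_neg_mul (add_pos (hc _) (hc _))]
    simp only [dotProduct, mulVec, Finset.mul_sum, star_trivial, of_apply]
    exact Finset.sum_congr rfl fun _ _ => Finset.sum_congr rfl fun _ _ => by ring
  rw [hquad]
  exact integral_nonneg fun t => sq_nonneg _

lemma exists_gram_inv_add {ι κ : Type*} [Fintype ι] [Fintype κ] {a : ι → ℝ} {b : κ → ℝ}
    (ha : ∀ i, 0 < a i) (hb : ∀ j, 0 < b j) :
    ∃ (m : ℕ) (g : ι → Fin m → ℝ) (h : κ → Fin m → ℝ),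
      (∀ i j, ∑ r, g i r * h j r = (a i + b j)⁻¹) ∧
      (∀ i, ∑ r, g i r ^ 2 = (a i + a i)⁻¹) ∧ (∀ j, ∑ r, h j r ^ 2 = (b j + b j)⁻¹) := by
  have hc : ∀ k, 0 < Sum.elim a b k := by rintro (i | j) <;> simp [ha, hb]
  obtain ⟨m, v, hv⟩ :=
    Matrix.posSemidef_iff_eq_sum_vecMulVec.mp (Matrix.posSemidef_inv_add hc)
  have hentry : ∀ k l, ∑ r, v r k * v r l = (Sum.elim a b k + Sum.elim a b l)⁻¹ := by
    intro k l
    have := congrFun (congrFun hv k) l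
    simp only [Matrix.of_apply, Matrix.sum_apply, Matrix.vecMulVec_apply, star_trivial] at this
    exact this.symm
  refine ⟨m, fun i r => v r (.inl i), fun j r => v r (.inr j), fun i j => hentry _ _,
    fun i => ?_, fun j => ?_⟩
  · simpa [sq] using hentry (.inl i) (.inl i)
  · simpa [sq] using hentry (.inr j) (.inr j)

end CauchyMatrix

lemma norm_sum_le_mul_sqrt_mul_sum {ρ F : Type*} [Fintype ρ] [SeminormedAddCommGroup F]
    {z : ρ → F} {P Q : ρ → ℝ} {ε : ℝ} (hε : 0 ≤ ε) (hP : ∀ r, 0 ≤ P r) (hQ : ∀ r, 0 ≤ Q r)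
    (hz : ∀ r, ‖z r‖ ≤ ε * √(P r * Q r)) :
    ‖∑ r, z r‖ ≤ ε * √((∑ r, P r) * ∑ r, Q r) :=
  calc ‖∑ r, z r‖ ≤ ∑ r, ‖z r‖ := norm_sum_le _ _
    _ ≤ ∑ r, ε * (√(P r) * √(Q r)) :=
      Finset.sum_le_sum fun r _ => Real.sqrt_mul (hP r) (Q r) ▸ hz r
    _ ≤ ε * (√(∑ r, P r) * √(∑ r, Q r)) := by
      rw [← Finset.mul_sum]
      exact mul_le_mul_of_nonneg_left (Real.sum_sqrt_mul_sqrt_le _ hP hQ) hε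
    _ = ε * √((∑ r, P r) * ∑ r, Q r) := by
      rw [Real.sqrt_mul (Finset.sum_nonneg fun r _ => hP r)]

section InnerProduct

variable {𝕜 E : Type*} [RCLike 𝕜] [NormedAddCommGroup E] [InnerProductSpace 𝕜 E]

lemma inner_sum_smul_apply_sum_smul {ι κ : Type*} [Fintype ι] [Fintype κ] (S : E →L[𝕜] E)
    (p : ι → E) (q : κ → E) (φ : ι → 𝕜) (ψ : κ → 𝕜) :
    ⟪∑ i, φ i • p i, S (∑ j, ψ j • q j)⟫_𝕜 = ∑ i, ∑ j, conj (φ i) * ψ j * ⟪p i, S (q j)⟫_𝕜 := by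
  simp only [map_sum, map_smul, sum_inner, inner_sum, inner_smul_left, inner_smul_right,
    Finset.mul_sum, mul_left_comm (ψ _), mul_assoc]
  exact Finset.sum_comm

lemma inner_mul_self_sub_mul_self_apply {A B : E →L[𝕜] E} (hA : (A : E →ₗ[𝕜] E).IsSymmetric)
    {p q : E} {a b : ℝ} (hp : A p = (a : 𝕜) • p) (hq : B q = (b : 𝕜) • q) :
    ⟪p, (B * B - A * A) q⟫_𝕜 = (a + b) * ⟪p, (B - A) q⟫_𝕜 := by
  have hsylvester : B * B - A * A = A * (B - A) + (B - A) * B := by noncomm_ring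
  have hAp : ∀ x, ⟪p, A x⟫_𝕜 = a * ⟪p, x⟫_𝕜 := fun x => by
    rw [← ContinuousLinearMap.coe_coe, ← hA, ContinuousLinearMap.coe_coe, hp, inner_smul_left,
      RCLike.conj_ofReal]
  rw [hsylvester, add_apply, mul_apply_eq_comp, mul_apply_eq_comp, hq, map_smul,
    inner_add_right, hAp, inner_smul_right]
  ring

lemma exists_orthonormalBasis_eigenvector_pos [FiniteDimensional 𝕜 E]
    {A : E →L[𝕜] E} (hA : (A : E →ₗ[𝕜] E).IsSymmetric)
    (hpos : ∀ v, v ≠ 0 → 0 < RCLike.re ⟪A v, v⟫_𝕜) :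
    ∃ (e : OrthonormalBasis (Fin (Module.finrank 𝕜 E)) 𝕜 E) (a : Fin (Module.finrank 𝕜 E) → ℝ),
      (∀ i, 0 < a i) ∧ ∀ i, A (e i) = (a i : 𝕜) • e i := by
  refine ⟨hA.eigenvectorBasis rfl, hA.eigenvalues rfl, fun i => ?_,
    hA.apply_eigenvectorBasis rfl⟩
  have := hpos _ ((hA.eigenvectorBasis rfl).orthonormal.ne_zero i)
  rw [← ContinuousLinearMap.coe_coe, hA.apply_eigenvectorBasis rfl i, inner_smul_left,
    inner_self_eq_norm_sq_to_K, (hA.eigenvectorBasis rfl).orthonormal.1 i] at this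
  simpa using this

lemma re_inner_mul_self_apply_nonneg {A : E →L[𝕜] E} (hA : (A : E →ₗ[𝕜] E).IsSymmetric) (v : E) :
    0 ≤ RCLike.re ⟪v, (A * A) v⟫_𝕜 := by
  have hsymm := hA v (A v)
  rw [ContinuousLinearMap.coe_coe] at hsymm
  rw [mul_apply_eq_comp, ← hsymm]
  exact inner_self_nonneg

namespace OrthonormalBasis

variable {ι κ ρ : Type*} [Fintype ι] [Fintype κ] [Fintype ρ]

noncomputable def scaleRepr (e : OrthonormalBasis ι 𝕜 E) (c : ι → ℝ) (u : E) : E :=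
  ∑ i, ((c i : 𝕜) * e.repr u i) • e i

lemma scaleRepr_one (e : OrthonormalBasis ι 𝕜 E) (u : E) : e.scaleRepr 1 u = u := by
  simp [scaleRepr, e.sum_repr]

lemma re_inner_scaleRepr_apply_scaleRepr (e : OrthonormalBasis ι 𝕜 E) {S : E →L[𝕜] E}
    {μ : ι → ℝ} (hS : ∀ i, S (e i) = (μ i : 𝕜) • e i) (c : ι → ℝ) (u : E) :
    RCLike.re ⟪e.scaleRepr c u, S (e.scaleRepr c u)⟫_𝕜 = ∑ i, μ i * c i ^ 2 * ‖e.repr u i‖ ^ 2 := by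
  simp only [scaleRepr, map_sum, map_smul, hS, smul_smul, e.orthonormal.inner_sum]
  refine Finset.sum_congr rfl fun i _ => ?_
  rw [← mul_assoc, RCLike.conj_mul, ← RCLike.ofReal_pow, ← RCLike.ofReal_mul,
    RCLike.ofReal_re, norm_mul, RCLike.norm_ofReal, mul_pow, sq_abs]
  ring

lemma sum_re_inner_scaleRepr_mul_self_apply (e : OrthonormalBasis ι 𝕜 E) {A : E →L[𝕜] E}
    {a : ι → ℝ} (hA : ∀ i, A (e i) = (a i : 𝕜) • e i) {g : ι → ρ → ℝ}
    (hg : ∀ i, ∑ r, g i r ^ 2 = (a i + a i)⁻¹) (u : E) :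
    ∑ r, RCLike.re ⟪e.scaleRepr (g · r) u, (A * A) (e.scaleRepr (g · r) u)⟫_𝕜
      = RCLike.re ⟪u, A u⟫_𝕜 / 2 := by
  have hAA : ∀ i, (A * A) (e i) = ((a i ^ 2 : ℝ) : 𝕜) • e i := fun i => by
    rw [mul_apply_eq_comp, hA, map_smul, hA, smul_smul]
    push_cast
    ring_nf
  conv_rhs => rw [← e.scaleRepr_one u]
  simp only [re_inner_scaleRepr_apply_scaleRepr e hAA, re_inner_scaleRepr_apply_scaleRepr e hA]
  rw [Finset.sum_comm, Finset.sum_div]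
  refine Finset.sum_congr rfl fun i _ => ?_
  simp only [← Finset.sum_mul, ← Finset.mul_sum, hg, Pi.one_apply, one_pow, mul_one]
  rcases eq_or_ne (a i) 0 with ha | ha
  · simp [ha]
  · field_simp
    ring

lemma inner_sub_apply_eq_sum_inner_mul_self_sub_mul_self {A B : E →L[𝕜] E}
    (hA : (A : E →ₗ[𝕜] E).IsSymmetric) (e : OrthonormalBasis ι 𝕜 E) (f : OrthonormalBasis κ 𝕜 E)
    {a : ι → ℝ} {b : κ → ℝ} (hae : ∀ i, A (e i) = (a i : 𝕜) • e i)
    (hbf : ∀ j, B (f j) = (b j : 𝕜) • f j) (hab : ∀ i j, a i + b j ≠ 0)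
    {g : ι → ρ → ℝ} {h : κ → ρ → ℝ} (hgh : ∀ i j, ∑ r, g i r * h j r = (a i + b j)⁻¹)
    (u u' : E) :
    ⟪u, (B - A) u'⟫_𝕜
      = ∑ r, ⟪e.scaleRepr (g · r) u, (B * B - A * A) (f.scaleRepr (h · r) u')⟫_𝕜 := by
  conv_lhs => rw [← e.sum_repr u, ← f.sum_repr u']
  simp only [scaleRepr, inner_sum_smul_apply_sum_smul,
    inner_mul_self_sub_mul_self_apply hA (hae _) (hbf _)]
  rw [Finset.sum_comm (γ := ρ)]
  refine Finset.sum_congr rfl fun i _ => ?_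
  rw [Finset.sum_comm (γ := ρ)]
  refine Finset.sum_congr rfl fun j _ => ?_
  have hgh' : ∑ r, (g i r : 𝕜) * h j r = ((a i + b j)⁻¹ : ℝ) := by exact_mod_cast hgh i j
  have hab' : (a i : 𝕜) + b j ≠ 0 := by exact_mod_cast hab i j
  calc conj (e.repr u i) * f.repr u' j * ⟪e i, (B - A) (f j)⟫_𝕜
      = (∑ r, (g i r : 𝕜) * h j r) * (a i + b j)
          * (conj (e.repr u i) * f.repr u' j * ⟪e i, (B - A) (f j)⟫_𝕜) := by
        rw [hgh']; push_cast; field_simp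
    _ = _ := by
        rw [Finset.sum_mul, Finset.sum_mul]
        refine Finset.sum_congr rfl fun r _ => ?_
        simp only [map_mul, RCLike.conj_ofReal]
        ring

end OrthonormalBasis

end InnerProduct

theorem sqrt_form_perturbation_bound_general
    {E : Type*} [NormedAddCommGroup E] [InnerProductSpace ℂ E] [FiniteDimensional ℂ E]
    (H M sH sM : E →L[ℂ] E) (ε : ℝ) (hε : 0 ≤ ε)
    (hsH : IsSelfAdjoint sH) (hsH_pos : ∀ v : E, v ≠ 0 → 0 < (⟪sH v, v⟫_ℂ).re)
    (hsH_sq : sH * sH = H)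
    (hsM : IsSelfAdjoint sM) (hsM_pos : ∀ v : E, v ≠ 0 → 0 < (⟪sM v, v⟫_ℂ).re)
    (hsM_sq : sM * sM = M)
    (hform : ∀ u u' : E, ‖⟪u, M u'⟫_ℂ - ⟪u, H u'⟫_ℂ‖
        ≤ ε * Real.sqrt ((⟪u, H u⟫_ℂ).re * (⟪u', M u'⟫_ℂ).re)) :
    ∀ u u' : E, ‖⟪u, sM u'⟫_ℂ - ⟪u, sH u'⟫_ℂ‖
        ≤ (ε / 2) * Real.sqrt ((⟪u, sH u⟫_ℂ).re * (⟪u', sM u'⟫_ℂ).re) := by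
  intro u u'
  obtain ⟨e, a, ha, hae⟩ := exists_orthonormalBasis_eigenvector_pos hsH.isSymmetric hsH_pos
  obtain ⟨f, b, hb, hbf⟩ := exists_orthonormalBasis_eigenvector_pos hsM.isSymmetric hsM_pos
  obtain ⟨m, g, h, hgh, hg, hh⟩ := exists_gram_inv_add ha hb
  have hsum := e.inner_sub_apply_eq_sum_inner_mul_self_sub_mul_self hsH.isSymmetric f hae hbf
    (fun i j => (add_pos (ha i) (hb j)).ne') hgh u u'
  rw [← inner_sub_right, ← sub_apply, hsum]
  calc _ ≤ ε * √((∑ r, RCLike.re ⟪e.scaleRepr (g · r) u, (sH * sH) (e.scaleRepr (g · r) u)⟫_ℂ)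
          * ∑ r, RCLike.re ⟪f.scaleRepr (h · r) u', (sM * sM) (f.scaleRepr (h · r) u')⟫_ℂ) := by
        refine norm_sum_le_mul_sqrt_mul_sum hε
          (fun r => re_inner_mul_self_apply_nonneg hsH.isSymmetric _)
          (fun r => re_inner_mul_self_apply_nonneg hsM.isSymmetric _) fun r => ?_
        rw [hsH_sq, hsM_sq, sub_apply, inner_sub_right]
        exact hform _ _
    _ = ε / 2 * √((⟪u, sH u⟫_ℂ).re * (⟪u', sM u'⟫_ℂ).re) := by
        rw [e.sum_re_inner_scaleRepr_mul_self_apply hae hg,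
          f.sum_re_inner_scaleRepr_mul_self_apply hbf hh, div_mul_div_comm,
          show (2 : ℝ) * 2 = 2 ^ 2 by norm_num, Real.sqrt_div' _ (by positivity),
          Real.sqrt_sq zero_le_two, RCLike.re_to_complex, RCLike.re_to_complex]
        ring

/-- A relative form bound between `M` and `H` with constant `ε` implies the same type of
bound between `M^{1/2}` and `H^{1/2}` with constant `ε/2`.  The square roots are
characterized as the unique positive square roots `sH`, `sM`. -/
theorem sqrt_form_perturbation_bound
    {E : Type*} [NormedAddCommGroup E] [InnerProductSpace ℂ E] [FiniteDimensional ℂ E]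
    (H M sH sM : E →L[ℂ] E) (ε : ℝ) (hε : 0 ≤ ε)
    (hH : IsSelfAdjoint H) (hHpos : ∀ v : E, v ≠ 0 → 0 < (⟪H v, v⟫_ℂ).re)
    (hM : IsSelfAdjoint M) (hMpos : ∀ v : E, v ≠ 0 → 0 < (⟪M v, v⟫_ℂ).re)
    (hsH : IsSelfAdjoint sH) (hsH_pos : ∀ v : E, v ≠ 0 → 0 < (⟪sH v, v⟫_ℂ).re)
    (hsH_sq : sH * sH = H)
    (hsM : IsSelfAdjoint sM) (hsM_pos : ∀ v : E, v ≠ 0 → 0 < (⟪sM v, v⟫_ℂ).re)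
    (hsM_sq : sM * sM = M)
    (hform : ∀ u u' : E, ‖⟪u, M u'⟫_ℂ - ⟪u, H u'⟫_ℂ‖
        ≤ ε * Real.sqrt ((⟪u, H u⟫_ℂ).re * (⟪u', M u'⟫_ℂ).re)) :
    ∀ u u' : E, ‖⟪u, sM u'⟫_ℂ - ⟪u, sH u'⟫_ℂ‖
        ≤ (ε / 2) * Real.sqrt ((⟪u, sH u⟫_ℂ).re * (⟪u', sM u'⟫_ℂ).re) :=
  sqrt_form_perturbation_bound_general H M sH sM ε hε hsH hsH_pos hsH_sq hsM hsM_pos hsM_sq hform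
end

section
/- Let H and M be positive definite Hermitian matrices satisfying (1−ε)⟨u, Mu⟩ ≤ ⟨u, Hu⟩ ≤ (1+ε)⟨u, Mu⟩ for all u and some 0 ≤ ε < 1. Then ‖S‖ ≤ ε/√(1−ε), where S = H^{1/2}M^{−1/2} − H^{−1/2}M^{1/2}. -/
open scoped InnerProductSpace

lemma aux_norm_le {E : Type*} [NormedAddCommGroup E] [InnerProductSpace ℂ E] [CompleteSpace E]
    (T : E →L[ℂ] E) (hT : IsSelfAdjoint T) (c : ℝ) (hc : 0 ≤ c)
    (h : ∀ u : E, |(⟪T u, u⟫_ℂ).re| ≤ c * ‖u‖ ^ 2) : ‖T‖ ≤ c := by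
  have hadj : ContinuousLinearMap.adjoint T = T :=
    ContinuousLinearMap.isSelfAdjoint_iff'.mp hT
  have hsym : ∀ x y : E, (⟪T y, x⟫_ℂ).re = (⟪T x, y⟫_ℂ).re := by
    intro x y
    have : ⟪T y, x⟫_ℂ = ⟪y, T x⟫_ℂ := by
      conv_lhs => rw [← hadj]
      rw [ContinuousLinearMap.adjoint_inner_left]
    rw [this, ← inner_conj_symm y (T x)]
    exact Complex.conj_re _
  have key : ∀ x y : E, (⟪T x, y⟫_ℂ).re ≤ c / 2 * (‖x‖ ^ 2 + ‖y‖ ^ 2) := by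
    intro x y
    have e1 : (⟪T (x + y), x + y⟫_ℂ).re
        = (⟪T x, x⟫_ℂ).re + (⟪T y, y⟫_ℂ).re + 2 * (⟪T x, y⟫_ℂ).re := by
      rw [map_add, inner_add_left, inner_add_right, inner_add_right]
      simp only [Complex.add_re]
      rw [hsym x y]; ring
    have e2 : (⟪T (x - y), x - y⟫_ℂ).re
        = (⟪T x, x⟫_ℂ).re + (⟪T y, y⟫_ℂ).re - 2 * (⟪T x, y⟫_ℂ).re := by
      rw [map_sub, inner_sub_left, inner_sub_right, inner_sub_right]
      simp only [Complex.sub_re]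
      rw [hsym x y]; ring
    have p := parallelogram_law_with_norm ℂ x y
    have h1 := h (x + y)
    have h2 := h (x - y)
    have h1' := abs_le.mp h1
    have h2' := abs_le.mp h2
    nlinarith [sq_nonneg (‖x + y‖), sq_nonneg (‖x - y‖), sq ‖x+y‖, sq ‖x-y‖]
  have key2 : ∀ x y : E, (⟪T x, y⟫_ℂ).re ≤ c * (‖x‖ * ‖y‖) := by
    intro x y
    rcases eq_or_ne x 0 with rfl | hx
    · simp [hc]
    rcases eq_or_ne y 0 with rfl | hy
    · simp [hc]
    have hxn : (0:ℝ) < ‖x‖ := norm_pos_iff.mpr hx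
    have hyn : (0:ℝ) < ‖y‖ := norm_pos_iff.mpr hy
    set a : ℝ := Real.sqrt (‖y‖ / ‖x‖) with ha
    have ha2 : a ^ 2 = ‖y‖ / ‖x‖ := Real.sq_sqrt (by positivity)
    have hapos : 0 < a := Real.sqrt_pos.mpr (by positivity)
    have hk := key (a • x) (a⁻¹ • y)
    have hinner : (⟪T (a • x), a⁻¹ • y⟫_ℂ).re = (⟪T x, y⟫_ℂ).re := by
      rw [T.map_smul_of_tower, RCLike.real_smul_eq_coe_smul (K := ℂ) a,
        RCLike.real_smul_eq_coe_smul (K := ℂ) a⁻¹, inner_smul_left, inner_smul_right]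
      rw [RCLike.conj_ofReal, ← mul_assoc, ← RCLike.ofReal_mul, mul_inv_cancel₀ hapos.ne']
      simp
    have hn1 : ‖a • x‖ ^ 2 = ‖x‖ * ‖y‖ := by
      rw [norm_smul, mul_pow, Real.norm_eq_abs, sq_abs, ha2]
      field_simp
    have hn2 : ‖a⁻¹ • y‖ ^ 2 = ‖x‖ * ‖y‖ := by
      rw [norm_smul, mul_pow, Real.norm_eq_abs, sq_abs, inv_pow, ha2]
      field_simp
    rw [hinner, hn1, hn2] at hk
    linarith
  apply ContinuousLinearMap.opNorm_le_bound _ hc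
  intro x
  rcases eq_or_ne (T x) 0 with h0 | h0
  · rw [h0, norm_zero]; positivity
  have hTx : (0:ℝ) < ‖T x‖ := norm_pos_iff.mpr h0
  have := key2 x (T x)
  have hsq : (⟪T x, T x⟫_ℂ).re = ‖T x‖ ^ 2 := inner_self_eq_norm_sq (𝕜 := ℂ) (T x)
  rw [hsq] at this
  have : ‖T x‖ * ‖T x‖ ≤ (c * ‖x‖) * ‖T x‖ := by nlinarith
  exact le_of_mul_le_mul_right this hTx

/-- If `(1-ε)⟨u,Mu⟩ ≤ ⟨u,Hu⟩ ≤ (1+ε)⟨u,Mu⟩` for all `u` with `0 ≤ ε < 1`, then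
`‖S‖ ≤ ε/√(1-ε)` where `S = H^{1/2}M^{-1/2} - H^{-1/2}M^{1/2}`.  The (inverse) square
roots are characterized as the unique positive operators with the defining relations. -/
theorem norm_S_bound
    {E : Type*} [NormedAddCommGroup E] [InnerProductSpace ℂ E] [FiniteDimensional ℂ E]
    (H M sH sM invSH invSM : E →L[ℂ] E) (ε : ℝ) (hε0 : 0 ≤ ε) (hε1 : ε < 1)
    (hH : IsSelfAdjoint H) (hHpos : ∀ v : E, v ≠ 0 → 0 < (⟪H v, v⟫_ℂ).re)
    (hM : IsSelfAdjoint M) (hMpos : ∀ v : E, v ≠ 0 → 0 < (⟪M v, v⟫_ℂ).re)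
    (hsH : IsSelfAdjoint sH) (hsH_pos : ∀ v : E, v ≠ 0 → 0 < (⟪sH v, v⟫_ℂ).re)
    (hsH_sq : sH * sH = H) (hinvSH : sH * invSH = 1 ∧ invSH * sH = 1)
    (hsM : IsSelfAdjoint sM) (hsM_pos : ∀ v : E, v ≠ 0 → 0 < (⟪sM v, v⟫_ℂ).re)
    (hsM_sq : sM * sM = M) (hinvSM : sM * invSM = 1 ∧ invSM * sM = 1)
    (hform : ∀ u : E, (1 - ε) * (⟪u, M u⟫_ℂ).re ≤ (⟪u, H u⟫_ℂ).re ∧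
        (⟪u, H u⟫_ℂ).re ≤ (1 + ε) * (⟪u, M u⟫_ℂ).re) :
    ‖sH * invSM - invSH * sM‖ ≤ ε / Real.sqrt (1 - ε) := by
  have h1ε : (0:ℝ) < 1 - ε := by linarith
  have hs : (0:ℝ) < Real.sqrt (1 - ε) := Real.sqrt_pos.mpr h1ε
  have hs2 : Real.sqrt (1 - ε) ^ 2 = 1 - ε := Real.sq_sqrt h1ε.le
  -- self-adjointness of inverses
  have hinvSM_sa : IsSelfAdjoint invSM := by
    have h1 : star invSM * sM = 1 := by
      have := congrArg star hinvSM.1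
      simpa [star_mul, hsM.star_eq] using this
    have : star invSM = star invSM * (sM * invSM) := by rw [hinvSM.1, mul_one]
    rw [← mul_assoc, h1, one_mul] at this
    exact this
  have hinvSH_sa : IsSelfAdjoint invSH := by
    have h1 : star invSH * sH = 1 := by
      have := congrArg star hinvSH.1
      simpa [star_mul, hsH.star_eq] using this
    have : star invSH = star invSH * (sH * invSH) := by rw [hinvSH.1, mul_one]
    rw [← mul_assoc, h1, one_mul] at this
    exact this
  -- pointwise inverse relations
  have hMinv : ∀ w : E, sM (invSM w) = w := fun w =>
    congrFun (congrArg DFunLike.coe hinvSM.1) w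
  have hinvM : ∀ w : E, invSM (sM w) = w := fun w =>
    congrFun (congrArg DFunLike.coe hinvSM.2) w
  have hHinv : ∀ w : E, sH (invSH w) = w := fun w =>
    congrFun (congrArg DFunLike.coe hinvSH.1) w
  have hinvH : ∀ w : E, invSH (sH w) = w := fun w =>
    congrFun (congrArg DFunLike.coe hinvSH.2) w
  have hHpt : ∀ w : E, H w = sH (sH w) := fun w =>
    (congrFun (congrArg DFunLike.coe hsH_sq) w).symm
  have hMpt : ∀ w : E, M w = sM (sM w) := fun w =>
    (congrFun (congrArg DFunLike.coe hsM_sq) w).symm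
  -- adjoint-based inner identities
  have hsM_inner : ∀ x y : E, ⟪sM x, y⟫_ℂ = ⟪x, sM y⟫_ℂ := by
    intro x y
    conv_lhs => rw [← ContinuousLinearMap.isSelfAdjoint_iff'.mp hsM]
    rw [ContinuousLinearMap.adjoint_inner_left]
  have hsH_inner : ∀ x y : E, ⟪sH x, y⟫_ℂ = ⟪x, sH y⟫_ℂ := by
    intro x y
    conv_lhs => rw [← ContinuousLinearMap.isSelfAdjoint_iff'.mp hsH]
    rw [ContinuousLinearMap.adjoint_inner_left]
  have hinvSM_inner : ∀ x y : E, ⟪invSM x, y⟫_ℂ = ⟪x, invSM y⟫_ℂ := by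
    intro x y
    conv_lhs => rw [← ContinuousLinearMap.isSelfAdjoint_iff'.mp hinvSM_sa]
    rw [ContinuousLinearMap.adjoint_inner_left]
  have hnorm : ∀ w : E, (⟪w, w⟫_ℂ).re = ‖w‖ ^ 2 := fun w => inner_self_eq_norm_sq (𝕜 := ℂ) w
  -- real part symmetry helper
  have hre : ∀ x y : E, (⟪x, y⟫_ℂ).re = (⟪y, x⟫_ℂ).re := by
    intro x y
    rw [← inner_conj_symm y x]
    exact Complex.conj_re _
  -- form bound for D = H - M
  set D : E →L[ℂ] E := H - M with hD
  have hD_sa : IsSelfAdjoint D := hH.sub hM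
  have hDform : ∀ u : E, |(⟪D u, u⟫_ℂ).re| ≤ ε * (⟪M u, u⟫_ℂ).re := by
    intro u
    have h1 := (hform u).1
    have h2 := (hform u).2
    have e1 : (⟪u, M u⟫_ℂ).re = (⟪M u, u⟫_ℂ).re := hre u (M u)
    have e2 : (⟪u, H u⟫_ℂ).re = (⟪H u, u⟫_ℂ).re := hre u (H u)
    have e3 : (⟪D u, u⟫_ℂ).re = (⟪H u, u⟫_ℂ).re - (⟪M u, u⟫_ℂ).re := by
      simp [hD, ContinuousLinearMap.sub_apply, inner_sub_left]
    rw [abs_le]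
    constructor <;> [nlinarith; nlinarith]
  -- the middle operator T
  set T : E →L[ℂ] E := invSM * (D * invSM) with hT
  have hT_sa : IsSelfAdjoint T := by
    have : T = invSM * D * star invSM := by
      rw [hinvSM_sa.star_eq, hT, mul_assoc]
    rw [this]
    exact hD_sa.conjugate invSM
  have hT_norm : ‖T‖ ≤ ε := by
    apply aux_norm_le T hT_sa ε hε0
    intro u
    have hTapp : T u = invSM (D (invSM u)) := rfl
    have h1 : ⟪T u, u⟫_ℂ = ⟪D (invSM u), invSM u⟫_ℂ := by
      rw [hTapp, hinvSM_inner]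
    have h2 := hDform (invSM u)
    have h3 : (⟪M (invSM u), invSM u⟫_ℂ).re = ‖u‖ ^ 2 := by
      rw [hMpt, hsM_inner, hMinv, hnorm]
    rw [h1]
    calc |(⟪D (invSM u), invSM u⟫_ℂ).re| ≤ ε * (⟪M (invSM u), invSM u⟫_ℂ).re := h2
      _ = ε * ‖u‖ ^ 2 := by rw [h3]
  -- norm of K = invSH * sM
  have hK_norm : ‖invSH * sM‖ ≤ 1 / Real.sqrt (1 - ε) := by
    have hstar : ‖invSH * sM‖ = ‖sM * invSH‖ := by
      rw [← norm_star (sM * invSH), star_mul, hsM.star_eq, hinvSH_sa.star_eq]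
    rw [hstar]
    apply ContinuousLinearMap.opNorm_le_bound _ (by positivity)
    intro y
    have hsq : (1 - ε) * ‖sM (invSH y)‖ ^ 2 ≤ ‖y‖ ^ 2 := by
      have h1 := (hform (invSH y)).1
      have e1 : (⟪invSH y, M (invSH y)⟫_ℂ).re = ‖sM (invSH y)‖ ^ 2 := by
        rw [hMpt, hre, hsM_inner, hnorm]
      have e2 : (⟪invSH y, H (invSH y)⟫_ℂ).re = ‖y‖ ^ 2 := by
        rw [hHpt, hre, hsH_inner, hHinv, hnorm]
      rw [e1, e2] at h1
      exact h1
    have hgoal : ‖sM (invSH y)‖ * Real.sqrt (1 - ε) ≤ ‖y‖ := by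
      have hnn : 0 ≤ ‖sM (invSH y)‖ * Real.sqrt (1 - ε) := by positivity
      nlinarith [norm_nonneg y, norm_nonneg (sM (invSH y))]
    rw [ContinuousLinearMap.mul_apply]
    calc ‖sM (invSH y)‖ = (‖sM (invSH y)‖ * Real.sqrt (1 - ε)) / Real.sqrt (1 - ε) := by
          field_simp
      _ ≤ ‖y‖ / Real.sqrt (1 - ε) := by
          gcongr
      _ = 1 / Real.sqrt (1 - ε) * ‖y‖ := by ring
  -- factorization S = K * T
  have hfact : sH * invSM - invSH * sM = (invSH * sM) * T := by
    ext u
    simp only [hT, hD, ContinuousLinearMap.sub_apply, ContinuousLinearMap.mul_apply, map_sub,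
      hHpt, hMpt, hMinv, hinvM, hinvH]
  rw [hfact]
  calc ‖(invSH * sM) * T‖ ≤ ‖invSH * sM‖ * ‖T‖ := norm_mul_le _ _
    _ ≤ (1 / Real.sqrt (1 - ε)) * ε := by
        apply mul_le_mul hK_norm hT_norm (norm_nonneg _) (by positivity)
    _ = ε / Real.sqrt (1 - ε) := by ring
end
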